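/- Let s ≥ 1 and r ≥ 1 be integers, let α_v = (-1)^{v+1} (s!)^2 / (v (s+v)! (s-v)!) for v = 1,…,s, and let H_L be a symmetric real r×r matrix with entries h_{vw} (indices 0,…,r−1) satisfying, for every j = 1,…,2s−1, j Σ_{v=0}^{r−1} Σ_{w=0}^{r−1} h_{vw} (−1)^{j−1} (r−w)^{j−1} = −(−r)^j + Σ_{v=1}^{s} α_v Σ_{w=0}^{v−1} ( w^j + (w−v)^j ). Then the row sums σ_v = Σ_{w=0}^{r−1} h_{vw} satisfy j Σ_{v=0}^{r−1} σ_v (r−v)^{j−1} = r^j − (−1)^j β_j for every j = 1,…,2s−1. -/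

import Mathlib

/-!
Put `S_j = ∑_{v=1}^s α_v ∑_{w<v} (w^j + (w - v)^j)`. By symmetry of `H_L` the compatibility
condition is `(-1)^(j-1)` times the accuracy condition with right-hand side `r^j - (-1)^j S_j`,
so everything reduces to `S_j = β_j`.

With `F = B_{j+1}` the Bernoulli polynomial, telescoping `F(x + 1) - F(x) = (j + 1) x^j` gives
`(j + 1) ∑_{w<v} (w^j + (w - v)^j) = F(v) - F(-v)`, so `(j + 1) S_j` is the order-`2s` centered
difference `∑ α_v (F(v) - F(-v))` of `F` at `0`. That difference is exact on polynomials `p` of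
degree `≤ 2s`: writing `p = p(0) + X q`, the `2s`-th central difference of `q` at `0` vanishes
because `deg q < 2s`, and pairing its nodes `±v` turns this into `∑ α_v (p(v) - p(-v)) = p'(0)`.
Hence `(j + 1) S_j = F'(0) = (j + 1) β_j`.
-/

open Finset

section

open Polynomial

theorem Finset.sum_range_two_mul_add_one {M : Type*} [AddCommMonoid M] (f : ℕ → M) (s : ℕ) :
    ∑ k ∈ range (2 * s + 1), f k = f s + ∑ v ∈ Icc 1 s, (f (s - v) + f (s + v)) := by
  rw [show 2 * s + 1 = s + (s + 1) by ring, sum_range_add, sum_range_succ', ← sum_range_reflect,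
    ← Ico_add_one_right_eq_Icc, sum_Ico_eq_sum_range, sum_add_distrib, add_tsub_cancel_right]
  simp only [add_zero, Nat.sub_sub, add_comm 1, ← add_assoc]
  abel

theorem Polynomial.sum_range_neg_one_pow_mul_choose_mul_eval_eq_zero {R : Type*} [CommRing R]
    {p : R[X]} {n : ℕ} (hp : p.natDegree < n) (y : R) :
    ∑ k ∈ range (n + 1), (-1) ^ (n - k) * n.choose k * p.eval (y + k) = 0 := by
  have h := fwdDiff_iter_eq_sum_shift 1 p.eval n y
  rw [fwdDiff_iter_eq_zero_of_degree_lt hp] at h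
  simpa [zsmul_eq_mul] using h.symm

theorem Polynomial.sum_neg_one_pow_mul_choose_mul_eval_add_eval_neg {R : Type*} [CommRing R]
    {q : R[X]} {s : ℕ} (hq : q.natDegree < 2 * s) :
    ∑ v ∈ Icc 1 s,
        (-1) ^ (s + v) * (2 * s).choose (s + v) * (q.eval (v : R) + q.eval (-(v : R))) =
      -((-1) ^ s * (2 * s).choose s * q.eval 0) := by
  have h := sum_range_neg_one_pow_mul_choose_mul_eval_eq_zero hq (-s)
  rw [sum_range_two_mul_add_one, show 2 * s - s = s by omega, neg_add_cancel] at h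
  rw [eq_neg_iff_add_eq_zero, add_comm]
  convert h using 2
  refine sum_congr rfl fun v hv => ?_
  obtain ⟨hv1, hvs⟩ := mem_Icc.mp hv
  have hsign : (-1 : R) ^ (s - v) = (-1) ^ (s + v) := by
    rw [show s + v = s - v + 2 * v by omega, pow_add, pow_mul, neg_one_sq, one_pow, mul_one]
  rw [show 2 * s - (s - v) = s + v by omega, show 2 * s - (s + v) = s - v by omega, hsign,
    Nat.choose_symm_of_eq_add (by omega : 2 * s = (s - v) + (s + v)), Nat.cast_sub hvs]
  push_cast
  ring_nf

theorem Polynomial.natDegree_bernoulli_le (n : ℕ) : (Polynomial.bernoulli n).natDegree ≤ n := by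
  rw [natDegree_le_iff_coeff_eq_zero]
  intro i hi
  simp [coeff_bernoulli, hi.not_ge]

theorem Polynomial.bernoulli_succ_eval_add_sub_eval (j v : ℕ) (c : ℚ) :
    (Polynomial.bernoulli (j + 1)).eval (v + c) - (Polynomial.bernoulli (j + 1)).eval c =
      (j + 1) * ∑ w ∈ range v, ((w : ℚ) + c) ^ j := by
  have hstep : ∀ w : ℕ, (Polynomial.bernoulli (j + 1)).eval ((w + 1 : ℕ) + c) -
      (Polynomial.bernoulli (j + 1)).eval (w + c) = (j + 1) * ((w : ℚ) + c) ^ j := fun w => by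
    rw [show ((w + 1 : ℕ) : ℚ) + c = 1 + (w + c) by push_cast; ring, bernoulli_eval_one_add]
    push_cast
    ring
  rw [mul_sum, ← sum_congr rfl fun w _ => hstep w,
    sum_range_sub fun w => (Polynomial.bernoulli (j + 1)).eval ((w : ℚ) + c)]
  simp

theorem Polynomial.bernoulli_succ_eval_sub_eval_neg (j v : ℕ) :
    (Polynomial.bernoulli (j + 1)).eval (v : ℚ) -
        (Polynomial.bernoulli (j + 1)).eval (-(v : ℚ)) =
      (j + 1) * ∑ w ∈ range v, ((w : ℚ) ^ j + ((w : ℚ) - v) ^ j) := by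
  have h0 := bernoulli_succ_eval_add_sub_eval j v 0
  have hv := bernoulli_succ_eval_add_sub_eval j v (-v)
  simp only [add_zero, add_neg_cancel, ← sub_eq_add_neg] at h0 hv
  rw [sum_add_distrib]
  linear_combination h0 + hv

def centeredDiffCoeff (K : Type*) [Field K] (s v : ℕ) : K :=
  (-1 : K) ^ (v + 1) * (Nat.factorial s : K) ^ 2 /
    ((v : K) * (Nat.factorial (s + v) : K) * (Nat.factorial (s - v) : K))

theorem centeredDiffCoeff_mul_natCast {K : Type*} [Field K] [CharZero K] {s v : ℕ}
    (hv : 1 ≤ v) (hvs : v ≤ s) :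
    centeredDiffCoeff K s v * v =
      (-1) ^ (v + 1) * (2 * s).choose (s + v) / (2 * s).choose s := by
  rw [Nat.cast_choose K (by omega : s + v ≤ 2 * s), Nat.cast_choose K (by omega : s ≤ 2 * s),
    show 2 * s - (s + v) = s - v by omega, show 2 * s - s = s by omega, centeredDiffCoeff]
  have : (v : K) ≠ 0 := Nat.cast_ne_zero.mpr (by omega)
  have : ((2 * s).factorial : K) ≠ 0 := Nat.cast_ne_zero.mpr (Nat.factorial_ne_zero _)
  field_simp

theorem sum_centeredDiffCoeff_mul_eval_sub_eval_neg {K : Type*} [Field K] [CharZero K] {s : ℕ}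
    {p : K[X]} (hp : p.natDegree ≤ 2 * s) :
    ∑ v ∈ Icc 1 s, centeredDiffCoeff K s v * (p.eval (v : K) - p.eval (-(v : K))) =
      p.coeff 1 := by
  obtain rfl | hs := s.eq_zero_or_pos
  · simp [coeff_eq_zero_of_natDegree_lt (by omega : p.natDegree < 1)]
  set q := p.divX
  have hpq : ∀ x, p.eval x = x * q.eval x + p.coeff 0 := fun x => by
    have h := congrArg (eval x) (divX_mul_X_add p)
    simp only [eval_add, eval_mul, eval_X, eval_C] at h
    linear_combination -h
  have hq : q.eval 0 = p.coeff 1 := by rw [← coeff_zero_eq_eval_zero, coeff_divX]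
  have hstencil := sum_neg_one_pow_mul_choose_mul_eval_add_eval_neg (q := q) (s := s)
    (by rw [natDegree_divX_eq_natDegree_tsub_one]; omega)
  have hsq : ((-1 : K) ^ s) ^ 2 = 1 := by rw [← pow_mul, pow_mul', neg_one_sq, one_pow]
  have hC : ((2 * s).choose s : K) ≠ 0 := Nat.cast_ne_zero.mpr (Nat.choose_pos (by omega)).ne'
  have hterm : ∀ v ∈ Icc 1 s, centeredDiffCoeff K s v * (p.eval (v : K) - p.eval (-(v : K))) =
      -(-1) ^ s * ((-1) ^ (s + v) * (2 * s).choose (s + v) * (q.eval (v : K) + q.eval (-(v : K)))) /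
        (2 * s).choose s := by
    intro v hv
    obtain ⟨hv1, hvs⟩ := mem_Icc.mp hv
    calc centeredDiffCoeff K s v * (p.eval (v : K) - p.eval (-(v : K)))
        = centeredDiffCoeff K s v * v * (q.eval (v : K) + q.eval (-(v : K))) := by
          rw [hpq, hpq]; ring
      _ = _ := by
          rw [centeredDiffCoeff_mul_natCast hv1 hvs, pow_add, pow_succ]
          field_simp
          linear_combination
            ((-1 : K) ^ v * (2 * s).choose (s + v) * (q.eval (v : K) + q.eval (-(v : K)))) * hsq
  rw [sum_congr rfl hterm, ← sum_div, ← mul_sum, hstencil, hq, div_eq_iff hC]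
  linear_combination (2 * s).choose s * p.coeff 1 * hsq

theorem sum_centeredDiffCoeff_mul_sum_pow_add_sub_pow {K : Type*} [Field K] [CharZero K]
    {s j : ℕ} (hj : j + 1 ≤ 2 * s) :
    ∑ v ∈ Icc 1 s,
        centeredDiffCoeff K s v * ∑ w ∈ range v, ((w : K) ^ j + ((w : K) - v) ^ j) =
      _root_.bernoulli j := by
  set p := (Polynomial.bernoulli (j + 1)).map (Rat.castHom K)
  have hinner : ∀ v : ℕ, p.eval (v : K) - p.eval (-(v : K)) =
      (j + 1 : K) * ∑ w ∈ range v, ((w : K) ^ j + ((w : K) - v) ^ j) := by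
    intro v
    have h := congrArg (Rat.cast : ℚ → K) (Polynomial.bernoulli_succ_eval_sub_eval_neg j v)
    rw [show -(v : K) = ((-(v : ℤ) : ℤ) : K) by push_cast; rfl, Polynomial.eval_natCast_map,
      Polynomial.eval_intCast_map]
    push_cast at h ⊢
    exact h
  have hp : p.natDegree ≤ 2 * s :=
    Polynomial.natDegree_map_le.trans ((Polynomial.natDegree_bernoulli_le _).trans hj)
  have hcoeff : p.coeff 1 = (j + 1) * _root_.bernoulli j := by
    simp [p, Polynomial.coeff_bernoulli, mul_comm]
  have hj0 : (j + 1 : K) ≠ 0 := by exact_mod_cast j.succ_ne_zero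
  refine mul_left_cancel₀ hj0 ?_
  calc (j + 1 : K) * ∑ v ∈ Icc 1 s, centeredDiffCoeff K s v *
        ∑ w ∈ range v, ((w : K) ^ j + ((w : K) - v) ^ j)
      = ∑ v ∈ Icc 1 s, centeredDiffCoeff K s v * (p.eval (v : K) - p.eval (-(v : K))) := by
        rw [mul_sum]
        exact sum_congr rfl fun v _ => by rw [hinner]; ring
    _ = (j + 1) * _root_.bernoulli j := by
        rw [sum_centeredDiffCoeff_mul_eval_sub_eval_neg hp, hcoeff]

end

theorem Matrix.IsSymm.sum_sum_apply_mul {n R : Type*} [Fintype n] [CommSemiring R]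
    {H : Matrix n n R} (hH : H.IsSymm) (g : n → R) :
    ∑ v, ∑ w, H v w * g w = ∑ v, (∑ w, H v w) * g v := by
  rw [Finset.sum_comm]
  simp only [Finset.sum_mul, hH.apply]

theorem sbp_full_norm_row_sums_general (s r : ℕ) (α : ℕ → ℝ)
    (hα : ∀ v : ℕ, α v = (-1 : ℝ) ^ (v + 1) * (Nat.factorial s : ℝ) ^ 2 /
      ((v : ℝ) * (Nat.factorial (s + v) : ℝ) * (Nat.factorial (s - v) : ℝ)))
    (H : Matrix (Fin r) (Fin r) ℝ) (hsym : H.IsSymm)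
    (hcompat : ∀ j : ℕ, 1 ≤ j → j ≤ 2 * s - 1 →
      (j : ℝ) * ∑ v : Fin r, ∑ w : Fin r,
          H v w * (-1 : ℝ) ^ (j - 1) * ((r - (w : ℕ) : ℕ) : ℝ) ^ (j - 1) =
        -(-(r : ℝ)) ^ j + ∑ v ∈ Finset.Icc 1 s, α v *
          ∑ w ∈ Finset.range v, ((w : ℝ) ^ j + ((w : ℝ) - (v : ℝ)) ^ j)) :
    ∀ j : ℕ, 1 ≤ j → j ≤ 2 * s - 1 →
      (j : ℝ) * ∑ v : Fin r, (∑ w : Fin r, H v w) * ((r - (v : ℕ) : ℕ) : ℝ) ^ (j - 1) =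
        (r : ℝ) ^ j - (-1 : ℝ) ^ j * (bernoulli j : ℝ) := by
  intro j hj1 hj2
  obtain rfl : α = centeredDiffCoeff ℝ s := funext hα
  have key := hcompat j hj1 hj2
  simp only [mul_assoc] at key
  rw [sum_centeredDiffCoeff_mul_sum_pow_add_sub_pow (by omega),
    hsym.sum_sum_apply_mul fun w => (-1 : ℝ) ^ (j - 1) * ((r - (w : ℕ) : ℕ) : ℝ) ^ (j - 1)] at key
  obtain ⟨k, rfl⟩ : ∃ k, j = k + 1 := ⟨j - 1, by omega⟩
  simp only [add_tsub_cancel_right, mul_left_comm _ ((-1 : ℝ) ^ k), ← mul_sum] at key ⊢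
  have hsq : ((-1 : ℝ) ^ k) ^ 2 = 1 := by rw [← pow_mul, pow_mul', neg_one_sq, one_pow]
  rw [neg_pow (r : ℝ)] at key
  linear_combination (-1 : ℝ) ^ k * key + ((r : ℝ) ^ (k + 1) -
    ((k + 1 : ℕ) : ℝ) * ∑ v : Fin r, (∑ w : Fin r, H v w) * ((r - (v : ℕ) : ℕ) : ℝ) ^ k) * hsq

/-- if the symmetric boundary block `H_L` of an SBP weight matrix
satisfies the compatibility conditions (with `i = 0`)
`j ∑_v ∑_w h_{vw} (−1)^{j−1} (r−w)^{j−1} = −(−r)^j + ∑_{v=1}^s α_v ∑_{w=0}^{v−1} (w^j + (w−v)^j)`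
for `j = 1, …, 2s−1`, then its row sums `σ_v = ∑_w h_{vw}` satisfy the quadrature
accuracy conditions `j ∑_v σ_v (r−v)^{j−1} = r^j − (−1)^j β_j` for `j = 1, …, 2s−1`. -/
theorem sbp_full_norm_row_sums (s r : ℕ) (hs : 1 ≤ s) (hr : 1 ≤ r) (α : ℕ → ℝ)
    (hα : ∀ v : ℕ, α v = (-1 : ℝ) ^ (v + 1) * (Nat.factorial s : ℝ) ^ 2 /
      ((v : ℝ) * (Nat.factorial (s + v) : ℝ) * (Nat.factorial (s - v) : ℝ)))
    (H : Matrix (Fin r) (Fin r) ℝ) (hsym : H.IsSymm)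
    (hcompat : ∀ j : ℕ, 1 ≤ j → j ≤ 2 * s - 1 →
      (j : ℝ) * ∑ v : Fin r, ∑ w : Fin r,
          H v w * (-1 : ℝ) ^ (j - 1) * ((r - (w : ℕ) : ℕ) : ℝ) ^ (j - 1) =
        -(-(r : ℝ)) ^ j + ∑ v ∈ Finset.Icc 1 s, α v *
          ∑ w ∈ Finset.range v, ((w : ℝ) ^ j + ((w : ℝ) - (v : ℝ)) ^ j)) :
    ∀ j : ℕ, 1 ≤ j → j ≤ 2 * s - 1 →
      (j : ℝ) * ∑ v : Fin r, (∑ w : Fin r, H v w) * ((r - (v : ℕ) : ℕ) : ℝ) ^ (j - 1) =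
        (r : ℝ) ^ j - (-1 : ℝ) ^ j * (bernoulli j : ℝ) :=
  sbp_full_norm_row_sums_general s r α hα H hsym hcompat
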